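/- arXiv:1702.08847 — 2 statements merged into one kernel-verified Lean document; each statement's English description precedes it below -/
import Mathlib

section
/- If the internal-energy flux increment is defined by δf_e = δf_E - ((ū+u̲)/2)·δf_m + (1/2) ū u̲ δf_ρ, then the finite-volume update |C|(ρ^{n+1}-ρ^n) + δf_ρ = 0, |C|(m^{n+1}-m^n) + δf_m = 0, |C|(E^{n+1}-E^n) + δf_E = 0 implies |C|(e^{n+1}-e^n) + δf_e = 0. -/
theorem internal_energy_update_general (C ρn ρn1 un un1 en en1 δfρ δfm δfE : ℝ)
    (hρ : C * (ρn1 - ρn) + δfρ = 0)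
    (hm : C * (ρn1 * un1 - ρn * un) + δfm = 0)
    (hE : C * ((en1 + (1/2) * ρn1 * un1^2) - (en + (1/2) * ρn * un^2)) + δfE = 0) :
    C * (en1 - en) +
      (δfE - ((un1 + un)/2) * δfm + (1/2) * (un1 * un) * δfρ) = 0 := by
  -- The kinetic energy obeys Δ(ρu²/2) = (ū + u̲)/2 · Δm - ū u̲/2 · Δρ exactly.
  linear_combination hE - ((un1 + un)/2) * hm + (1/2) * (un1 * un) * hρ

theorem internal_energy_update (C ρn ρn1 un un1 en en1 δfρ δfm δfE : ℝ)
    (hC : 0 < C) (hρn : 0 < ρn) (hρn1 : 0 < ρn1)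
    (hρ : C * (ρn1 - ρn) + δfρ = 0)
    (hm : C * (ρn1 * un1 - ρn * un) + δfm = 0)
    (hE : C * ((en1 + (1/2) * ρn1 * un1^2) - (en + (1/2) * ρn * un^2)) + δfE = 0) :
    C * (en1 - en) +
      (δfE - ((un1 + un)/2) * δfm + (1/2) * (un1 * un) * δfρ) = 0 :=
  internal_energy_update_general C ρn ρn1 un un1 en en1 δfρ δfm δfE hρ hm hE
end

section
/- For the mixture internal energy e = α₁e₁ + α₂e₂ with equal phase pressures p₁ = p₂ = p, the differential identity de = (Σ_j α_j/κ_j) dp - Σ_j (χ_j/κ_j) d(α_j ρ_j) + Σ_j (ρ_j c_j²/κ_j - p) dα_j holds, where dp_j = κ_j de_j + χ_j dρ_j, c_j² is defined by ρ_j c_j² = κ_j(e_j + p) + ρ_j χ_j, and dα₂ = -dα₁. -/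
/-- The sound-speed relation says `ρ c² / κ - p = e + ρ χ / κ`, so after solving the pressure
differential for `de` every term matches. -/
theorem phase_energy_differential {α ρ e p κ χ csq dp de dρ dα : ℝ} (hκ : κ ≠ 0)
    (hdp : dp = κ * de + χ * dρ) (hc : ρ * csq = κ * (e + p) + ρ * χ) :
    α * de + e * dα = α / κ * dp - χ / κ * (α * dρ + ρ * dα) + (ρ * csq / κ - p) * dα := by
  linear_combination (norm := (field_simp; ring)) -(α / κ) * hdp - dα / κ * hc

theorem mixture_energy_differential_general
    (α₁ α₂ ρ₁ ρ₂ e₁ e₂ p κ₁ κ₂ χ₁ χ₂ c₁sq c₂sq : ℝ)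
    (dp de₁ de₂ dρ₁ dρ₂ dα₁ dα₂ : ℝ)
    (hκ₁ : κ₁ ≠ 0) (hκ₂ : κ₂ ≠ 0)
    (hdp₁ : dp = κ₁ * de₁ + χ₁ * dρ₁)
    (hdp₂ : dp = κ₂ * de₂ + χ₂ * dρ₂)
    (hc₁ : ρ₁ * c₁sq = κ₁ * (e₁ + p) + ρ₁ * χ₁)
    (hc₂ : ρ₂ * c₂sq = κ₂ * (e₂ + p) + ρ₂ * χ₂) :
    (α₁ * de₁ + e₁ * dα₁) + (α₂ * de₂ + e₂ * dα₂) =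
      (α₁ / κ₁ + α₂ / κ₂) * dp
      - ((χ₁ / κ₁) * (α₁ * dρ₁ + ρ₁ * dα₁) + (χ₂ / κ₂) * (α₂ * dρ₂ + ρ₂ * dα₂))
      + ((ρ₁ * c₁sq / κ₁ - p) * dα₁ + (ρ₂ * c₂sq / κ₂ - p) * dα₂) := by
  rw [phase_energy_differential hκ₁ hdp₁ hc₁, phase_energy_differential hκ₂ hdp₂ hc₂]
  ring

theorem mixture_energy_differential
    (α₁ α₂ ρ₁ ρ₂ e₁ e₂ p κ₁ κ₂ χ₁ χ₂ c₁sq c₂sq : ℝ)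
    (dp de₁ de₂ dρ₁ dρ₂ dα₁ dα₂ : ℝ)
    (hα : α₁ + α₂ = 1) (hρ₁ : 0 < ρ₁) (hρ₂ : 0 < ρ₂)
    (hκ₁ : κ₁ ≠ 0) (hκ₂ : κ₂ ≠ 0)
    (hdα : dα₂ = -dα₁)
    (hdp₁ : dp = κ₁ * de₁ + χ₁ * dρ₁)
    (hdp₂ : dp = κ₂ * de₂ + χ₂ * dρ₂)
    (hc₁ : ρ₁ * c₁sq = κ₁ * (e₁ + p) + ρ₁ * χ₁)
    (hc₂ : ρ₂ * c₂sq = κ₂ * (e₂ + p) + ρ₂ * χ₂) :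
    (α₁ * de₁ + e₁ * dα₁) + (α₂ * de₂ + e₂ * dα₂) =
      (α₁ / κ₁ + α₂ / κ₂) * dp
      - ((χ₁ / κ₁) * (α₁ * dρ₁ + ρ₁ * dα₁) + (χ₂ / κ₂) * (α₂ * dρ₂ + ρ₂ * dα₂))
      + ((ρ₁ * c₁sq / κ₁ - p) * dα₁ + (ρ₂ * c₂sq / κ₂ - p) * dα₂) :=
  mixture_energy_differential_general α₁ α₂ ρ₁ ρ₂ e₁ e₂ p κ₁ κ₂ χ₁ χ₂ c₁sq c₂sq dp de₁ de₂ dρ₁ dρ₂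
    dα₁ dα₂ hκ₁ hκ₂ hdp₁ hdp₂ hc₁ hc₂
end
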